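/- arXiv:2207.08507 — 2 statements merged into one kernel-verified Lean document; each statement's English description precedes it below -/
import Mathlib

section
/- Every faithful action of G₃₅₁ on a set with exactly 27 elements is transitive: if X is a finite type with 27 elements and φ : G₃₅₁ → Equiv.Perm X is an injective group homomorphism, then the induced action of G₃₅₁ on X is transitive. -/
/-- `F₂₇`, a finite field with 27 elements. -/
abbrev F27 : Type := GaloisField 3 3

/-- `a` is a nonzero square in `F₂₇`. -/
def IsNonzeroSquare (a : F27) : Prop := a ≠ 0 ∧ ∃ c : F27, a = c ^ 2

/-- The set of affine permutations `x ↦ a·x + b` with `a` a nonzero square. -/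
def affineSet : Set (Equiv.Perm F27) :=
  { g | ∃ a b : F27, IsNonzeroSquare a ∧ ∀ x : F27, g x = a * x + b }


/-!
The subgroup `T` of translations has order 27 and index 13, and every element outside `T` has
order 13, because a translation commuting with a non-translation is trivial. An orbit of size
`d` satisfies `d ∣ 351`, so an orbit with fewer than 27 points has `d < 13` or `d = 13`. If
`d < 13`, the elements of order 13 fix the orbit pointwise and generate the group; if `d = 13`,
a point stabiliser has order 27, contains no element of order 13, and hence equals `T`. Either
way `T` acts trivially on every orbit of size `< 27`, so a faithful action on 27 points has a
single orbit.
-/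

open MulAction Equiv

theorem MulAction.smul_eq_self_of_pow_eq_one_of_card_orbit_lt {G X : Type*} [Group G]
    [MulAction G X] {p : ℕ} [Fact p.Prime] {g : G} (hg : g ^ p = 1) {x : X}
    [Finite (orbit G x)] (hx : Nat.card (orbit G x) < p) : g • x = x := by
  let H := Subgroup.zpowers g
  have hH : IsPGroup p H := by
    rintro ⟨_, k, rfl⟩
    refine ⟨1, Subtype.ext ?_⟩
    simp only [pow_one, Subgroup.coe_pow, Subgroup.coe_one]
    rw [← zpow_natCast, ← zpow_mul, mul_comm, zpow_mul, zpow_natCast, hg, one_zpow]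
  have hsub : orbit H x ⊆ orbit G x := fun _ ⟨h, hy⟩ => ⟨h, hy⟩
  have : Finite (orbit H x) := (Set.toFinite _).subset hsub
  obtain ⟨n, hn⟩ := hH.card_orbit x
  have hn0 : n = 0 := by
    by_contra h
    have := Nat.card_mono (Set.toFinite _) hsub
    have := Nat.le_self_pow h p
    omega
  rw [hn0, pow_zero, Nat.card_eq_one_iff_unique] at hn
  exact congrArg Subtype.val <|
    hn.1.elim ⟨g • x, ⟨g, Subgroup.mem_zpowers g⟩, rfl⟩ ⟨x, mem_orbit_self x⟩

theorem Subgroup.eq_top_of_forall_notMem_mem {G : Type*} [Group G] {H K : Subgroup G}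
    (hK : K ≠ ⊤) (h : ∀ g ∉ K, g ∈ H) : H = ⊤ := by
  obtain ⟨c, hc⟩ : ∃ c, c ∉ K := by
    contrapose! hK
    exact (Subgroup.eq_top_iff' K).2 hK
  refine (Subgroup.eq_top_iff' H).2 fun g => ?_
  by_cases hg : g ∈ K
  · have hgc : g * c ∉ K := fun h => hc (by simpa using K.mul_mem (K.inv_mem hg) h)
    simpa using H.mul_mem (h _ hgc) (H.inv_mem (h c hc))
  · exact h g hg

theorem Subgroup.le_of_forall_notMem_pow_eq_one {G : Type*} [Group G] {H K : Subgroup G} {q : ℕ}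
    (hK : ∀ g ∉ K, g ^ q = 1) (hH : (Nat.card H).Coprime q) : H ≤ K := by
  intro g hg
  by_contra hgK
  have h1 : orderOf g = 1 := Nat.eq_one_of_dvd_coprimes hH
    (Subgroup.orderOf_dvd_natCard H hg) (orderOf_dvd_of_pow_eq_one (hK g hgK))
  exact hgK (orderOf_eq_one_iff.1 h1 ▸ K.one_mem)

section OrderThreeFiftyOne

variable {G X : Type*} [Group G] [MulAction G X] [Finite X] {T : Subgroup G}

theorem le_stabilizer_of_card_orbit_lt_27 (hG : Nat.card G = 351) (hT : Nat.card T = 27)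
    (hpow : ∀ g ∉ T, g ^ 13 = 1) {x : X} (hx : Nat.card (orbit G x) < 27) :
    T ≤ stabilizer G x := by
  have : Fact (Nat.Prime 13) := ⟨by norm_num⟩
  have hT_ne_top : T ≠ ⊤ := by
    rintro rfl
    rw [Subgroup.card_top] at hT
    omega
  have hcard : Nat.card (stabilizer G x) * Nat.card (orbit G x) = 351 := by
    rw [Nat.card_coe_set_eq, ← index_stabilizer, Subgroup.card_mul_index, hG]
  obtain hlt | heq : Nat.card (orbit G x) < 13 ∨ Nat.card (orbit G x) = 13 := by
    have hdvd := Dvd.intro_left _ hcard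
    interval_cases Nat.card (orbit G x) <;> omega
  · rw [Subgroup.eq_top_of_forall_notMem_mem (H := stabilizer G x) hT_ne_top
      fun g hg => smul_eq_self_of_pow_eq_one_of_card_orbit_lt (hpow g hg) hlt]
    exact le_top
  · have hstab : Nat.card (stabilizer G x) = 27 := by rw [heq] at hcard; omega
    have : Finite T := Nat.finite_of_card_ne_zero (by omega)
    refine (Subgroup.eq_of_le_of_card_ge (Subgroup.le_of_forall_notMem_pow_eq_one hpow ?_) ?_).ge
    · rw [hstab]; norm_num
    · rw [hstab, hT]

theorem isPretransitive_of_card_eq_351 [FaithfulSMul G X] (hG : Nat.card G = 351)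
    (hT : Nat.card T = 27) (hpow : ∀ g ∉ T, g ^ 13 = 1) (hX : Nat.card X = 27) :
    IsPretransitive G X := by
  obtain ⟨x⟩ : Nonempty X := (Nat.card_pos_iff.1 (by omega)).1
  by_contra hnot
  have hlt : ∀ y : X, Nat.card (orbit G y) < 27 := by
    intro y
    have hle : Nat.card (orbit G y) ≤ 27 := hX ▸ Finite.card_subtype_le _
    refine hle.lt_of_ne fun h => hnot ?_
    rw [isPretransitive_iff_orbit_eq_univ y]
    exact Set.finite_univ.eq_of_subset_of_card_le (Set.subset_univ _) (by rw [Nat.card_univ, hX, h])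
  have hbot : T = ⊥ := by
    refine (Subgroup.eq_bot_iff_forall T).2 fun t ht => eq_of_smul_eq_smul (α := X) fun y => ?_
    rw [one_smul]
    exact le_stabilizer_of_card_orbit_lt_27 hG hT hpow (hlt y) ht
  rw [hbot, Subgroup.card_bot] at hT
  omega

end OrderThreeFiftyOne

lemma natCard_F27 : Nat.card F27 = 27 := by
  rw [GaloisField.card 3 3 (by norm_num)]; norm_num

namespace affineSet

lemma apply_eq {g : Perm F27} (hg : g ∈ affineSet) (x : F27) : g x = (g 1 - g 0) * x + g 0 := by
  obtain ⟨a, b, -, hab⟩ := hg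
  simp only [hab]
  ring

lemma isNonzeroSquare {g : Perm F27} (hg : g ∈ affineSet) : IsNonzeroSquare (g 1 - g 0) := by
  obtain ⟨a, b, ha, hab⟩ := hg
  simpa [hab] using ha

lemma mulLeft_trans_addRight_mem {a : F27ˣ} (ha : IsSquare a) (b : F27) :
    (Units.mulLeft a).trans (Equiv.addRight b) ∈ affineSet := by
  obtain ⟨c, rfl⟩ := ha
  exact ⟨_, b, ⟨Units.ne_zero _, c, by simp [sq]⟩, fun x => rfl⟩

variable {G : Subgroup (Perm F27)} (hG : (G : Set (Perm F27)) = affineSet)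
include hG

lemma coe_mem (g : G) : (g : Perm F27) ∈ affineSet := hG ▸ g.2

lemma mem_of_mem {g : Perm F27} (hg : g ∈ affineSet) : g ∈ G := by
  rwa [← SetLike.mem_coe, hG]

noncomputable def linearPart : G →* F27ˣ where
  toFun g := Units.mk0 (g.1 1 - g.1 0) (sub_ne_zero.2 (g.1.injective.ne one_ne_zero))
  map_one' := Units.ext (by simp)
  map_mul' g h := Units.ext <| by
    simp only [Subgroup.coe_mul, Perm.coe_mul, Function.comp_apply, Units.val_mk0,
      Units.val_mul, apply_eq (coe_mem hG g) (h.1 _)]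
    ring

lemma apply_eq_linearPart_mul_add (g : G) (x : F27) : g.1 x = linearPart hG g * x + g.1 0 :=
  apply_eq (coe_mem hG g) x

lemma apply_eq_add_of_mem_ker {t : G} (ht : t ∈ (linearPart hG).ker) (x : F27) :
    t.1 x = x + t.1 0 := by
  rw [apply_eq_linearPart_mul_add hG, (linearPart hG).mem_ker.1 ht, Units.val_one, one_mul]

lemma range_linearPart : (linearPart hG).range = (powMonoidHom 2 : F27ˣ →* F27ˣ).range := by
  ext u
  constructor
  · rintro ⟨g, rfl⟩
    obtain ⟨h0, c, hc⟩ := isNonzeroSquare (coe_mem hG g)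
    refine ⟨Units.mk0 c fun hc0 => h0 (by simp [hc, hc0]), Units.ext ?_⟩
    simp [linearPart, hc]
  · rintro ⟨v, rfl⟩
    refine ⟨⟨_, mem_of_mem hG (mulLeft_trans_addRight_mem ⟨v, sq v⟩ 0)⟩, Units.ext ?_⟩
    simp [linearPart]

lemma card_range_linearPart : Nat.card (linearPart hG).range = 13 := by
  rw [range_linearPart hG, IsCyclic.card_powMonoidHom_range, Nat.card_units, natCard_F27]
  rfl

lemma card_ker_linearPart : Nat.card (linearPart hG).ker = 27 := by
  rw [← natCard_F27]
  refine Nat.card_eq_of_bijective (fun t => t.1.1 0) ⟨fun t s hts => ?_, fun b => ?_⟩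
  · ext x
    rw [apply_eq_add_of_mem_ker hG t.2, apply_eq_add_of_mem_ker hG s.2]
    exact congrArg (x + ·) hts
  · refine ⟨⟨⟨_, mem_of_mem hG (mulLeft_trans_addRight_mem IsSquare.one b)⟩, ?_⟩, ?_⟩
    · exact Units.ext (by simp [linearPart])
    · simp

lemma natCard_eq_351 : Nat.card G = 351 := by
  rw [← (linearPart hG).ker.card_mul_index, Subgroup.index_ker, card_ker_linearPart hG,
    card_range_linearPart hG]

lemma eq_one_of_mem_ker_of_commute {g t : G} (hg : linearPart hG g ≠ 1)
    (ht : t ∈ (linearPart hG).ker) (hgt : Commute g t) : t = 1 := by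
  have hcomm : g.1 (t.1 0) = t.1 (g.1 0) := congrArg (fun h : G => h.1 0) hgt
  rw [apply_eq_linearPart_mul_add hG g, apply_eq_add_of_mem_ker hG ht (g.1 0)] at hcomm
  have ht0 : t.1 0 = 0 := by
    have : ((linearPart hG g : F27) - 1) * t.1 0 = 0 := by linear_combination hcomm
    exact (mul_eq_zero.1 this).resolve_left (sub_ne_zero.2 fun h => hg (Units.ext h))
  ext x
  rw [apply_eq_add_of_mem_ker hG ht, ht0, add_zero]
  rfl

lemma pow_thirteen_eq_one {g : G} (hg : g ∉ (linearPart hG).ker) : g ^ 13 = 1 := by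
  refine eq_one_of_mem_ker_of_commute hG hg ?_ (Commute.self_pow g 13)
  rw [MonoidHom.mem_ker, map_pow]
  have := pow_card_eq_one' (G := (linearPart hG).range) (x := ⟨_, g, rfl⟩)
  rwa [card_range_linearPart hG, Subtype.ext_iff] at this

end affineSet

/-- Every faithful action of `G₃₅₁` on a set with 27 elements is transitive. -/
theorem statement10 (G : Subgroup (Equiv.Perm F27))
    (hG : (G : Set (Equiv.Perm F27)) = affineSet)
    (X : Type*) [Finite X] (hX : Nat.card X = 27)
    (φ : G →* Equiv.Perm X) (hφ : Function.Injective φ) :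
    ∀ x y : X, ∃ g : G, φ g x = y := by
  let : MulAction G X := MulAction.compHom X φ
  have : FaithfulSMul G X := ⟨fun h => hφ (Equiv.ext h)⟩
  have := isPretransitive_of_card_eq_351 (affineSet.natCard_eq_351 hG)
    (affineSet.card_ker_linearPart hG) (fun _ hg => affineSet.pow_thirteen_eq_one hG hg) hX
  exact exists_smul_eq G
end

section
/- Every subgroup of G₃₅₁ has order 1, 3, 9, 13, 27, or 351; in particular, G₃₅₁ has no subgroup of order 39 and no subgroup of order 117. -/
namespace Equiv.Perm

variable {K : Type*} [Field K]

def IsAffine (g : Perm K) : Prop := ∃ a b : K, ∀ x, g x = a * x + b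

def multiplier (g : Perm K) : K := g 1 - g 0

lemma multiplier_eq_of_forall_apply_eq {g : Perm K} {a b : K} (h : ∀ x, g x = a * x + b) :
    multiplier g = a := by
  simp only [multiplier, h]; ring

lemma multiplier_ne_zero (g : Perm K) : multiplier g ≠ 0 :=
  sub_ne_zero.mpr (g.injective.ne one_ne_zero)

namespace IsAffine

variable {g : Perm K}

lemma apply_eq (hg : IsAffine g) (x : K) : g x = multiplier g * x + g 0 := by
  obtain ⟨a, b, h⟩ := hg
  rw [multiplier_eq_of_forall_apply_eq h, h, h]; ring

lemma multiplier_mul (hg : IsAffine g) (h : Perm K) :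
    multiplier (g * h) = multiplier g * multiplier h := by
  simp only [multiplier, mul_apply, hg.apply_eq (h 1), hg.apply_eq (h 0)]; ring

lemma conj_apply_zero (hg : IsAffine g) {t : Perm K} (ht : ∀ x, t x = x + t 0) :
    (g * t * g⁻¹) 0 = multiplier g * t 0 := by
  have hy : multiplier g * g⁻¹ 0 + g 0 = 0 := by rw [← hg.apply_eq]; exact g.apply_symm_apply 0
  simp only [mul_apply, ht (g⁻¹ 0), hg.apply_eq (g⁻¹ 0 + t 0)]
  linear_combination hy

end IsAffine

variable (H : Subgroup (Perm K)) (hH : ∀ g ∈ H, IsAffine g)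

noncomputable def multiplierHom : H →* Kˣ where
  toFun g := Units.mk0 (multiplier (g : Perm K)) (multiplier_ne_zero _)
  map_one' := by ext; simp [multiplier]
  map_mul' g h := by ext; exact (hH g g.2).multiplier_mul h

@[simp]
lemma coe_multiplierHom (g : H) : (multiplierHom H hH g : K) = multiplier (g : Perm K) := rfl

variable {H hH}

lemma apply_eq_add_of_mem_ker {t : H} (ht : t ∈ (multiplierHom H hH).ker) (x : K) :
    (t : Perm K) x = x + (t : Perm K) 0 := by
  have h1 : multiplier (t : Perm K) = 1 := by simpa using congrArg Units.val ht
  rw [(hH t t.2).apply_eq, h1, one_mul]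

variable (H hH)

def translationHom : (multiplierHom H hH).ker →* Multiplicative K where
  toFun t := Multiplicative.ofAdd ((t : Perm K) 0)
  map_one' := rfl
  map_mul' s t := by
    rw [← ofAdd_add, add_comm]
    exact congrArg Multiplicative.ofAdd (apply_eq_add_of_mem_ker s.2 _)

lemma translationHom_injective : Function.Injective (translationHom H hH) := by
  intro s t hst
  have h0 : ((s : H) : Perm K) 0 = ((t : H) : Perm K) 0 := hst
  ext x
  rw [apply_eq_add_of_mem_ker s.2, apply_eq_add_of_mem_ker t.2, h0]

lemma card_ker_multiplierHom_dvd : Nat.card (multiplierHom H hH).ker ∣ Nat.card K :=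
  Subgroup.card_dvd_of_injective (H := Multiplicative K) _ (translationHom_injective H hH)

lemma orderOf_multiplierHom_le_card_ker [Finite K] {t : (multiplierHom H hH).ker} (ht : t ≠ 1)
    (g : H) :
    orderOf (multiplierHom H hH g) ≤ Nat.card (multiplierHom H hH).ker := by
  set a := multiplierHom H hH g
  have hb : ((t : H) : Perm K) 0 ≠ 0 := fun h0 =>
    ht (translationHom_injective H hH (congrArg Multiplicative.ofAdd h0))
  let conj (i : Fin (orderOf a)) : (multiplierHom H hH).ker :=
    ⟨g ^ (i : ℕ) * t * (g ^ (i : ℕ))⁻¹, (multiplierHom H hH).normal_ker.conj_mem _ t.2 _⟩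
  have conj_apply_zero (i : Fin (orderOf a)) :
      ((conj i : H) : Perm K) 0 = (a : K) ^ (i : ℕ) * ((t : H) : Perm K) 0 := by
    rw [← Units.val_pow_eq_pow_val, ← map_pow]
    exact (hH _ (g ^ (i : ℕ)).2).conj_apply_zero (apply_eq_add_of_mem_ker t.2)
  have conj_injective : Function.Injective conj := by
    intro i j hij
    have h := congrArg (fun s : (multiplierHom H hH).ker => ((s : H) : Perm K) 0) hij
    simp only [conj_apply_zero, mul_left_inj' hb] at h
    exact Fin.ext (pow_injOn_Iio_orderOf i.2 j.2 (Units.val_injective (by simpa using h)))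
  simpa using Nat.card_le_card_of_injective conj conj_injective

lemma card_ker_multiplierHom_eq_one_or_card_range_le [Finite K] :
    Nat.card (multiplierHom H hH).ker = 1 ∨
      Nat.card (multiplierHom H hH).range ≤ Nat.card (multiplierHom H hH).ker := by
  refine or_iff_not_imp_left.2 fun h => ?_
  obtain ⟨t, ht⟩ := Subgroup.ne_bot_iff_exists_ne_one.1 (mt Subgroup.card_eq_one.2 h)
  obtain ⟨⟨_, g, rfl⟩, hg⟩ := IsCyclic.exists_ofOrder_eq_natCard (α := (multiplierHom H hH).range)
  calc Nat.card (multiplierHom H hH).range = orderOf (multiplierHom H hH g) :=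
        hg.symm.trans (Subgroup.orderOf_mk _ _)
    _ ≤ _ := orderOf_multiplierHom_le_card_ker H hH ht g

end Equiv.Perm

open Equiv Perm

lemma card_F27 : Nat.card F27 = 3 ^ 3 :=
  GaloisField.card 3 3 three_ne_zero

lemma IsNonzeroSquare.pow_thirteen {a : F27} (ha : IsNonzeroSquare a) : a ^ 13 = 1 := by
  obtain ⟨ha0, c, rfl⟩ := ha
  have hc : c ≠ 0 := by rintro rfl; simp at ha0
  have hcard : Nat.card F27ˣ = 26 := by rw [Nat.card_units, card_F27]; norm_num
  have h := congrArg Units.val (pow_card_eq_one' (x := Units.mk0 c hc))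
  rw [hcard] at h
  simpa [← pow_mul] using h

lemma isAffine_of_mem_affineSet {g : Perm F27} (hg : g ∈ affineSet) : IsAffine g :=
  let ⟨a, b, _, h⟩ := hg; ⟨a, b, h⟩

lemma multiplier_pow_thirteen_of_mem_affineSet {g : Perm F27} (hg : g ∈ affineSet) :
    multiplier g ^ 13 = 1 := by
  obtain ⟨a, b, ha, h⟩ := hg
  rw [multiplier_eq_of_forall_apply_eq h]
  exact ha.pow_thirteen

lemma card_mem_of_coe_subset_affineSet (H : Subgroup (Perm F27))
    (hH : (H : Set (Perm F27)) ⊆ affineSet) :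
    Nat.card H ∈ ({1, 3, 9, 13, 27, 351} : Set ℕ) := by
  have hAff : ∀ g ∈ H, IsAffine g := fun g hg => isAffine_of_mem_affineSet (hH hg)
  set φ := multiplierHom H hAff
  have hcard : Nat.card H = Nat.card φ.ker * Nat.card φ.range := by
    rw [← φ.ker.card_mul_index, Subgroup.index_ker φ]
  have hker : Nat.card φ.ker ∣ 3 ^ 3 := card_F27 ▸ card_ker_multiplierHom_dvd H hAff
  have hrange : Nat.card φ.range ∣ 13 := by
    rw [← IsCyclic.exponent_eq_card]
    refine Monoid.exponent_dvd_of_forall_pow_eq_one fun ⟨_, g, rfl⟩ => ?_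
    ext
    simpa [φ] using multiplier_pow_thirteen_of_mem_affineSet (hH g.2)
  obtain ⟨i, hi, hk⟩ := (Nat.dvd_prime_pow Nat.prime_three).1 hker
  have h13 := card_ker_multiplierHom_eq_one_or_card_range_le H hAff
  rcases (Nat.prime_def.1 (by norm_num : Nat.Prime 13)).2 _ hrange with hr | hr <;>
    rw [hk, hr] at h13 <;> rw [hcard, hk, hr] <;> interval_cases i <;> simp at h13 ⊢

/-- Every subgroup of `G₃₅₁` has order 1, 3, 9, 13, 27 or 351; in particular there is no
subgroup of order 39 and no subgroup of order 117. -/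
theorem statement14 (G : Subgroup (Equiv.Perm F27))
    (hG : (G : Set (Equiv.Perm F27)) = affineSet) :
    (∀ H : Subgroup G, Nat.card H ∈ ({1, 3, 9, 13, 27, 351} : Set ℕ)) ∧
    (¬ ∃ H : Subgroup G, Nat.card H = 39) ∧
    (¬ ∃ H : Subgroup G, Nat.card H = 117) := by
  have hcard (H : Subgroup G) : Nat.card H ∈ ({1, 3, 9, 13, 27, 351} : Set ℕ) := by
    rw [← Subgroup.card_map_of_injective G.subtype_injective]
    refine card_mem_of_coe_subset_affineSet _ ?_
    rintro _ ⟨g, -, rfl⟩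
    exact hG ▸ g.2
  refine ⟨hcard, ?_, ?_⟩ <;> rintro ⟨H, hH⟩ <;> simpa [hH] using hcard H
end
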